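/- arXiv:1707.06166 — 3 statements merged into one kernel-verified Lean document; each statement's English description precedes it below -/
import Mathlib

section
/- If G is a non-constant H-inner function, then the closed z-invariant subspace [G] generated by G is a proper subspace of H (equivalently, G is not cyclic). -/
open Filter Topology
open scoped InnerProductSpace ComplexConjugate

/-- A weighted Hardy space `H²_ω`: a Hilbert space with an orthogonal basis of
monomials `e k` (representing `z^k`) with `‖e k‖² = ω k`, together with the shift
operator `S` (multiplication by `z`). -/
structure WeightedHardySpace where
  E : Type
  [instN : NormedAddCommGroup E]
  [instI : InnerProductSpace ℂ E]
  [instC : CompleteSpace E]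
  ω : ℕ → ℝ
  hωpos : ∀ k, 0 < ω k
  hω0 : ω 0 = 1
  hωlim : Tendsto (fun k => ω k / ω (k + 1)) atTop (𝓝 1)
  e : ℕ → E
  horth : ∀ j k, ⟪e j, e k⟫_ℂ = if j = k then (ω k : ℂ) else 0
  hdense : (Submodule.span ℂ (Set.range e)).topologicalClosure = ⊤
  S : E →L[ℂ] E
  hshift : ∀ k, S (e k) = e (k + 1)

attribute [instance] WeightedHardySpace.instN WeightedHardySpace.instI WeightedHardySpace.instC

namespace WeightedHardySpace

variable (H : WeightedHardySpace)

/-- The constant function `1`. -/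
noncomputable def one : H.E := H.e 0

/-- The `k`-th Taylor coefficient of `f`. -/
noncomputable def coeff (f : H.E) (k : ℕ) : ℂ := ⟪H.e k, f⟫_ℂ / (H.ω k : ℂ)

/-- Evaluation of `f` at a point `w` of the unit disk. -/
noncomputable def eval (f : H.E) (w : ℂ) : ℂ := ∑' k, H.coeff f k * w ^ k

/-- Multiplication of `f` by the polynomial `p`. -/
noncomputable def polyMul (p : Polynomial ℂ) (f : H.E) : H.E :=
  ∑ i ∈ p.support, p.coeff i • ((H.S ^ i) f)

/-- The closed shift-invariant subspace `[f]` generated by `f`. -/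
noncomputable def genSub (f : H.E) : Submodule ℂ H.E :=
  (Submodule.span ℂ (Set.range fun p : Polynomial ℂ => H.polyMul p f)).topologicalClosure

/-- `f` is `H`-inner: unit norm and `⟨z^j f, f⟩ = 0` for all `j ≥ 1`. -/
def IsInner (f : H.E) : Prop :=
  ‖f‖ = 1 ∧ ∀ j : ℕ, 1 ≤ j → ⟪(H.S ^ j) f, f⟫_ℂ = 0

end WeightedHardySpace

/-!
Because `G` is `H`-inner, `⟪G, p G⟫ = p(0)`, while `⟪1, p G⟫ = p(0) ⟪1, G⟫` since `1` is orthogonal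
to the range of the shift. So the continuous functionals `⟪1, ·⟫` and `⟪1, G⟫ ⟪G, ·⟫` agree on
`[G]`. If `[G]` were all of `H`, evaluating at `1` would give `|⟪1, G⟫| = 1 = ‖1‖ ‖G‖`, and the
equality case of Cauchy–Schwarz would make `G` a constant.
-/

namespace WeightedHardySpace

variable (H : WeightedHardySpace)

lemma inner_one_one : ⟪H.one, H.one⟫_ℂ = 1 := by
  rw [one, H.horth]
  simp [H.hω0]

lemma norm_one : ‖H.one‖ = 1 := by
  have h : ‖H.one‖ ^ 2 = 1 := by
    rw [← inner_self_eq_norm_sq (𝕜 := ℂ), H.inner_one_one, RCLike.one_re]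
  exact (pow_eq_one_iff_of_nonneg (norm_nonneg _) two_ne_zero).mp h

lemma inner_one_shift (f : H.E) : ⟪H.one, H.S f⟫_ℂ = 0 := by
  have hdense : Dense (Submodule.span ℂ (Set.range H.e) : Set H.E) :=
    Submodule.dense_iff_topologicalClosure_eq_top.mpr H.hdense
  have hzero : (innerSL ℂ H.one).comp H.S = 0 := by
    refine ContinuousLinearMap.ext_on hdense ?_
    rintro _ ⟨k, rfl⟩
    simp [one, H.hshift, H.horth]
  simpa using congrArg (fun φ : H.E →L[ℂ] ℂ => φ f) hzero

lemma inner_one_shift_pow (f : H.E) {i : ℕ} (hi : i ≠ 0) : ⟪H.one, (H.S ^ i) f⟫_ℂ = 0 := by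
  obtain ⟨j, rfl⟩ := Nat.exists_eq_succ_of_ne_zero hi
  rw [pow_succ', mul_apply_eq_comp]
  exact H.inner_one_shift _

lemma inner_one_polyMul (p : Polynomial ℂ) (f : H.E) :
    ⟪H.one, H.polyMul p f⟫_ℂ = p.coeff 0 * ⟪H.one, f⟫_ℂ := by
  rw [polyMul, inner_sum, Finset.sum_eq_single 0]
  · simp [inner_smul_right]
  · intro i _ hi
    rw [inner_smul_right, H.inner_one_shift_pow f hi, mul_zero]
  · intro h
    simp [Polynomial.notMem_support_iff.mp h]

variable {H}

lemma IsInner.inner_self_self {G : H.E} (hG : H.IsInner G) : ⟪G, G⟫_ℂ = 1 := by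
  simp [inner_self_eq_norm_sq_to_K, hG.1]

lemma IsInner.inner_polyMul {G : H.E} (hG : H.IsInner G) (p : Polynomial ℂ) :
    ⟪G, H.polyMul p G⟫_ℂ = p.coeff 0 := by
  rw [polyMul, inner_sum, Finset.sum_eq_single 0]
  · rw [inner_smul_right, pow_zero, one_apply_eq_self, hG.inner_self_self, mul_one]
  · intro i _ hi
    rw [inner_smul_right, ← inner_conj_symm, hG.2 i (Nat.one_le_iff_ne_zero.mpr hi), map_zero,
      mul_zero]
  · intro h
    simp [Polynomial.notMem_support_iff.mp h]

lemma IsInner.inner_one_eq_of_mem_genSub {G : H.E} (hG : H.IsInner G) {f : H.E}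
    (hf : f ∈ H.genSub G) : ⟪H.one, f⟫_ℂ = ⟪H.one, G⟫_ℂ * ⟪G, f⟫_ℂ := by
  have heq : Set.EqOn (innerSL ℂ H.one) (⟪H.one, G⟫_ℂ • innerSL ℂ G : H.E →L[ℂ] ℂ)
      (Set.range fun p : Polynomial ℂ => H.polyMul p G) := by
    rintro _ ⟨p, rfl⟩
    simp [H.inner_one_polyMul, hG.inner_polyMul, mul_comm]
  rw [genSub, ← SetLike.mem_coe, Submodule.topologicalClosure_coe] at hf
  simpa using ContinuousLinearMap.eqOn_closure_span heq hf

end WeightedHardySpace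

/-- A non-constant `H`-inner function generates a proper closed invariant subspace,
i.e. it is not cyclic. -/
theorem genSub_ne_top_of_isInner (H : WeightedHardySpace) (G : H.E)
    (hG : H.IsInner G) (hnc : ¬∃ c : ℂ, G = c • H.one) :
    H.genSub G ≠ ⊤ := by
  intro htop
  have hat_one := hG.inner_one_eq_of_mem_genSub (htop ▸ Submodule.mem_top : H.one ∈ H.genSub G)
  rw [H.inner_one_one, ← inner_conj_symm G, Complex.mul_conj, Complex.normSq_eq_norm_sq] at hat_one
  have hsq : ‖⟪H.one, G⟫_ℂ‖ ^ 2 = 1 := by exact_mod_cast hat_one.symm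
  have hcs : ‖⟪H.one, G⟫_ℂ‖ = ‖H.one‖ * ‖G‖ := by
    rw [H.norm_one, hG.1, one_mul]
    exact (pow_eq_one_iff_of_nonneg (norm_nonneg _) two_ne_zero).mp hsq
  have hone_ne : H.one ≠ 0 := norm_ne_zero_iff.mp (by simp [H.norm_one])
  have hG_ne : G ≠ 0 := norm_ne_zero_iff.mp (by simp [hG.1])
  obtain ⟨c, -, hc⟩ := (norm_inner_eq_norm_iff hone_ne hG_ne).mp hcs
  exact hnc ⟨c, hc⟩
end

section
/- If f is H-inner, then for every n the optimal approximant p_n* of degree n to 1/f is the constant polynomial conj(f(0)); equivalently, the orthogonal projection of 1 onto P_n f equals conj(f(0)) f for all n. -/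
open Filter Topology
open scoped InnerProductSpace ComplexConjugate

/-!
The vector `⟪f, 1⟫ • f - 1 = conj (f(0)) • f - 1` is orthogonal to every `p f`: against `z^j f`
with `j ≥ 1` both terms vanish (`f` is inner, and `z^j f` has no constant term), and against `f`
it is `⟪f, 1⟫ (‖f‖² - 1) = 0`. Hence, by Pythagoras, `‖p f - 1‖² = ‖(p - conj (f(0))) f‖² +
‖conj (f(0)) f - 1‖²`, so a minimiser satisfies `(p - conj (f(0))) f = 0`. Finally `p ↦ p f` is
injective for `f ≠ 0`: if `z^m` is the lowest monomial of `f` and `z^i` that of `q`, then the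
coefficient of `z^(m+i)` in `q f` is a nonzero multiple of `q_i f_m`.
-/

open Polynomial

theorem eq_zero_of_inner_eq_zero_of_norm_add_le {𝕜 E : Type*} [RCLike 𝕜] [NormedAddCommGroup E]
    [InnerProductSpace 𝕜 E] {v w : E} (h : inner 𝕜 v w = 0) (hle : ‖v + w‖ ≤ ‖w‖) : v = 0 := by
  have hsq : ‖v‖ * ‖v‖ + ‖w‖ * ‖w‖ ≤ ‖w‖ * ‖w‖ :=
    norm_add_sq_eq_norm_sq_add_norm_sq_of_inner_eq_zero v w h ▸
      mul_self_le_mul_self (norm_nonneg _) hle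
  exact norm_eq_zero.mp (mul_self_eq_zero.mp (le_antisymm (by linarith) (mul_self_nonneg _)))

namespace WeightedHardySpace

variable (H : WeightedHardySpace)

theorem ext_e {A B : H.E →L[ℂ] ℂ} (h : ∀ k, A (H.e k) = B (H.e k)) : A = B :=
  ContinuousLinearMap.ext_on (Submodule.dense_iff_topologicalClosure_eq_top.mpr H.hdense)
    (by rintro _ ⟨k, rfl⟩; exact h k)

theorem eq_zero_of_forall_inner_e_eq_zero {x : H.E} (h : ∀ k, ⟪H.e k, x⟫_ℂ = 0) : x = 0 := by
  have hx : innerSL ℂ x = 0 := H.ext_e fun k => by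
    rw [innerSL_apply_apply, ← inner_conj_symm, h k, map_zero, zero_apply]
  exact inner_self_eq_zero.mp congr($hx x)

theorem inner_e_zero_S (x : H.E) : ⟪H.e 0, H.S x⟫_ℂ = 0 := by
  have hA : (innerSL ℂ (H.e 0)).comp H.S = 0 := H.ext_e fun k => by
    simp [H.hshift, H.horth]
  simpa using congr($hA x)

theorem inner_e_succ_S (j : ℕ) (x : H.E) :
    ⟪H.e (j + 1), H.S x⟫_ℂ = (H.ω (j + 1) / H.ω j : ℂ) * ⟪H.e j, x⟫_ℂ := by
  have hA : (innerSL ℂ (H.e (j + 1))).comp H.S =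
      (H.ω (j + 1) / H.ω j : ℂ) • innerSL ℂ (H.e j) := H.ext_e fun k => by
    have hω : (H.ω j : ℂ) ≠ 0 := by exact_mod_cast (H.hωpos j).ne'
    simp only [ContinuousLinearMap.comp_apply, smul_apply, innerSL_apply_apply,
      H.hshift, H.horth, smul_eq_mul]
    by_cases hjk : j = k
    · subst hjk
      simp [hω]
    · simp [hjk]
  simpa using congr($hA x)

theorem inner_e_add_pow_S (m i : ℕ) (x : H.E) :
    ⟪H.e (m + i), (H.S ^ i) x⟫_ℂ = (H.ω (m + i) / H.ω m : ℂ) * ⟪H.e m, x⟫_ℂ := by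
  induction i with
  | zero =>
    have hω : (H.ω m : ℂ) ≠ 0 := by exact_mod_cast (H.hωpos m).ne'
    simp [hω]
  | succ i ih =>
    have hω : (H.ω (m + i) : ℂ) ≠ 0 := by exact_mod_cast (H.hωpos _).ne'
    rw [pow_succ', mul_apply_eq_comp, ← add_assoc, inner_e_succ_S, ih]
    field_simp

theorem inner_e_pow_S_eq_zero {m : ℕ} {x : H.E} (hx : ∀ k < m, ⟪H.e k, x⟫_ℂ = 0) (i : ℕ) :
    ∀ k < m + i, ⟪H.e k, (H.S ^ i) x⟫_ℂ = 0 := by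
  induction i with
  | zero => simpa using hx
  | succ i ih =>
    rintro (_ | j) hj
    · rw [pow_succ', mul_apply_eq_comp, inner_e_zero_S]
    · rw [pow_succ', mul_apply_eq_comp, inner_e_succ_S, ih j (by omega), mul_zero]

theorem inner_one_pow_S {i : ℕ} (hi : 1 ≤ i) (x : H.E) : ⟪H.one, (H.S ^ i) x⟫_ℂ = 0 :=
  H.inner_e_pow_S_eq_zero (m := 0) (by simp) i 0 (by omega)

theorem eval_zero (f : H.E) : H.eval f 0 = ⟪H.one, f⟫_ℂ := by
  rw [eval, tsum_eq_single 0 fun k hk => by simp [zero_pow hk]]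
  simp [coeff, one, H.hω0]

theorem polyMul_eq_aeval (p : ℂ[X]) (f : H.E) : H.polyMul p f = aeval H.S p f := by
  rw [aeval_def, eval₂_eq_sum, Polynomial.sum_def, polyMul, sum_apply]
  refine Finset.sum_congr rfl fun i _ => ?_
  rw [Algebra.algebraMap_eq_smul_one, smul_mul_assoc, one_mul, smul_apply]

theorem polyMul_C (a : ℂ) (f : H.E) : H.polyMul (C a) f = a • f := by
  simp [polyMul_eq_aeval, Algebra.algebraMap_eq_smul_one]

theorem polyMul_sub (p q : ℂ[X]) (f : H.E) :
    H.polyMul (p - q) f = H.polyMul p f - H.polyMul q f := by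
  simp [polyMul_eq_aeval]

theorem eq_zero_of_polyMul_eq_zero {f : H.E} (hf : f ≠ 0) {q : ℂ[X]} (hq : H.polyMul q f = 0) :
    q = 0 := by
  by_contra hq0
  have hex : ∃ k, ⟪H.e k, f⟫_ℂ ≠ 0 := by
    by_contra! h
    exact hf (H.eq_zero_of_forall_inner_e_eq_zero h)
  set m := Nat.find hex
  have hbelow : ∀ k < m, ⟪H.e k, f⟫_ℂ = 0 := fun k hk => not_not.mp (Nat.find_min hex hk)
  set i₀ := q.natTrailingDegree
  have hqi₀ : q.coeff i₀ ≠ 0 := mt trailingCoeff_eq_zero.mp hq0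
  have hω : (H.ω (m + i₀) / H.ω m : ℂ) ≠ 0 :=
    div_ne_zero (by exact_mod_cast (H.hωpos _).ne') (by exact_mod_cast (H.hωpos _).ne')
  have hcoeff : ⟪H.e (m + i₀), H.polyMul q f⟫_ℂ =
      q.coeff i₀ * ((H.ω (m + i₀) / H.ω m : ℂ) * ⟪H.e m, f⟫_ℂ) := by
    rw [polyMul, inner_sum, Finset.sum_eq_single i₀, inner_smul_right, inner_e_add_pow_S]
    · intro i hi hne
      have hlt : i₀ < i := (natTrailingDegree_le_of_mem_supp i hi).lt_of_ne' hne
      rw [inner_smul_right, H.inner_e_pow_S_eq_zero hbelow i _ (by omega), mul_zero]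
    · exact absurd (mem_support_iff.mpr hqi₀)
  rw [hq, inner_zero_right] at hcoeff
  exact mul_ne_zero hqi₀ (mul_ne_zero hω (Nat.find_spec hex)) hcoeff.symm

theorem inner_polyMul_smul_sub_one {f : H.E} (hf : H.IsInner f) (q : ℂ[X]) :
    ⟪H.polyMul q f, ⟪f, H.one⟫_ℂ • f - H.one⟫_ℂ = 0 := by
  rw [polyMul, sum_inner]
  refine Finset.sum_eq_zero fun i _ => ?_
  rw [inner_smul_left, inner_sub_right, inner_smul_right]
  rcases Nat.eq_zero_or_pos i with rfl | hi
  · rw [pow_zero, one_apply_eq_self, inner_self_eq_norm_sq_to_K, hf.1]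
    simp
  · rw [hf.2 i hi, ← inner_conj_symm ((H.S ^ i) f) H.one, H.inner_one_pow_S hi]
    simp

end WeightedHardySpace

theorem optimal_approximants_of_isInner_general (H : WeightedHardySpace) (f : H.E)
    (hf : H.IsInner f) (pstar : ℕ → Polynomial ℂ)
    (hmin : ∀ n, ∀ q : Polynomial ℂ, q.degree ≤ (n : ℕ) →
      ‖H.polyMul (pstar n) f - H.one‖ ≤ ‖H.polyMul q f - H.one‖) :
    ∀ n, pstar n = Polynomial.C ((starRingEnd ℂ) (H.eval f 0)) ∧
      H.polyMul (pstar n) f = ((starRingEnd ℂ) (H.eval f 0)) • f := by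
  intro n
  set a := ⟪f, H.one⟫_ℂ
  have ha : conj (H.eval f 0) = a := by rw [H.eval_zero, inner_conj_symm]
  have hf0 : f ≠ 0 := fun h => by simpa [h] using hf.1
  have hsplit : H.polyMul (pstar n) f - H.one = H.polyMul (pstar n - C a) f + (a • f - H.one) := by
    rw [H.polyMul_sub, H.polyMul_C]
    abel
  have hle : ‖H.polyMul (pstar n) f - H.one‖ ≤ ‖a • f - H.one‖ := by
    simpa [H.polyMul_C] using hmin n (C a) (degree_C_le.trans (WithBot.coe_le_coe.mpr n.zero_le))
  have hzero : H.polyMul (pstar n - C a) f = 0 :=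
    eq_zero_of_inner_eq_zero_of_norm_add_le (H.inner_polyMul_smul_sub_one hf _) (hsplit ▸ hle)
  have hp : pstar n = C a := sub_eq_zero.mp (H.eq_zero_of_polyMul_eq_zero hf0 hzero)
  rw [ha, hp, H.polyMul_C]
  exact ⟨rfl, rfl⟩

/-- If `f` is `H`-inner, then all optimal approximants are the constant `conj (f(0))`;
equivalently, the orthogonal projection of `1` onto `𝒫ₙ f` is `conj (f(0)) • f`. -/
theorem optimal_approximants_of_isInner (H : WeightedHardySpace) (f : H.E)
    (hf : H.IsInner f) (pstar : ℕ → Polynomial ℂ)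
    (hdeg : ∀ n, (pstar n).degree ≤ (n : ℕ))
    (hmin : ∀ n, ∀ q : Polynomial ℂ, q.degree ≤ (n : ℕ) →
      ‖H.polyMul (pstar n) f - H.one‖ ≤ ‖H.polyMul q f - H.one‖) :
    ∀ n, pstar n = Polynomial.C ((starRingEnd ℂ) (H.eval f 0)) ∧
      H.polyMul (pstar n) f = ((starRingEnd ℂ) (H.eval f 0)) • f :=
  optimal_approximants_of_isInner_general H f hf pstar hmin
end

section
/- For a finite set Z ⊂ D \ {0} of distinct points with Shapiro-Shields inner function g_Z, the distance from 1 to [g_Z] satisfies dist²_H(1, [g_Z]) = v K_Z^{-1} v*, where v = (1, ..., 1). -/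
/-! With `G` the Gram matrix of the kernels `k_{z_s}` (so that `K_Z = Gᵀ`), Cramer's rule gives
`f_Z = det K_Z • (1 - u)` with `u = ∑ s, (G⁻¹ v)_s • k_{z_s}`, the orthogonal projection of `1`
onto the span of the kernels. Each kernel is orthogonal to `[g_Z]`, since
`⟪k_w, z^j f⟫ = w^j f(w)` and `f_Z` vanishes on `Z`. Hence `1 - u ∈ [g_Z]` and `u ⊥ [g_Z]`, so
the distance is `‖u‖`; as `⟪k_{z_s}, u⟫ = 1` for every `s`, `‖u‖²` is the sum of the entries
of `G⁻¹`, which is that of `K_Z⁻¹`. -/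

open Filter Topology
open scoped InnerProductSpace ComplexConjugate

open scoped Matrix

theorem Matrix.det_updateCol_eq_det_mul_inv_mulVec {n R : Type*} [Fintype n] [DecidableEq n]
    [CommRing R] {A : Matrix n n R} (hA : IsUnit A.det) (i : n) (b : n → R) :
    (A.updateCol i b).det = A.det * (A⁻¹ *ᵥ b) i := by
  rw [← cramer_apply, cramer_eq_adjugate_mulVec, nonsing_inv_apply _ hA, smul_mulVec,
    Pi.smul_apply, smul_eq_mul, ← mul_assoc, IsUnit.mul_val_inv, one_mul]

section InnerProductSpace

variable {𝕜 E : Type*} [RCLike 𝕜] [NormedAddCommGroup E] [InnerProductSpace 𝕜 E]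

theorem Submodule.infDist_eq_norm_sub {K : Submodule 𝕜 E} {x y : E} (hy : y ∈ K)
    (hxy : x - y ∈ Kᗮ) : Metric.infDist x K = ‖x - y‖ := by
  rw [Metric.infDist_eq_iInf, (K.norm_eq_iInf_iff_inner_eq_zero hy).mpr
    fun w hw => inner_left_of_mem_orthogonal hw hxy]
  simp only [dist_eq_norm]
  rfl

namespace Matrix

variable {ι : Type*} [Fintype ι] [DecidableEq ι] {v : ι → E}

theorem inner_sum_gram_inv_mulVec_smul (hv : IsUnit (gram 𝕜 v).det) (b : ι → 𝕜) (r : ι) :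
    ⟪v r, ∑ s, ((gram 𝕜 v)⁻¹ *ᵥ b) s • v s⟫_𝕜 = b r := by
  simp only [inner_sum, inner_smul_right, mul_comm _ ⟪v r, _⟫_𝕜]
  change (gram 𝕜 v *ᵥ ((gram 𝕜 v)⁻¹ *ᵥ b)) r = b r
  rw [mulVec_mulVec, mul_nonsing_inv _ hv, one_mulVec]

theorem norm_sum_gram_inv_mulVec_one_smul_sq (hv : IsUnit (gram 𝕜 v).det) :
    (‖∑ s, ((gram 𝕜 v)⁻¹ *ᵥ 1) s • v s‖ : 𝕜) ^ 2 = ∑ i, ∑ j, (gram 𝕜 v)⁻¹ i j := by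
  set u := ∑ s, ((gram 𝕜 v)⁻¹ *ᵥ 1) s • v s
  have hvu : ∀ r, ⟪v r, u⟫_𝕜 = 1 := inner_sum_gram_inv_mulVec_smul hv 1
  have hnorm : (‖u‖ : 𝕜) ^ 2 = starRingEnd 𝕜 (∑ i, ∑ j, (gram 𝕜 v)⁻¹ i j) := by
    rw [← inner_self_eq_norm_sq_to_K]
    change ⟪∑ s, _ • v s, u⟫_𝕜 = _
    simp only [sum_inner, inner_smul_left, hvu, map_sum, mulVec, dotProduct, Pi.one_apply,
      mul_one]
  -- `‖u‖ ^ 2` is real, so the entry sum equals its own conjugate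
  rw [← RCLike.conj_conj (∑ i, ∑ j, (gram 𝕜 v)⁻¹ i j), ← hnorm, map_pow, RCLike.conj_ofReal]

end Matrix

end InnerProductSpace

namespace WeightedHardySpace

variable (H : WeightedHardySpace)

theorem coeff_e (j m : ℕ) : H.coeff (H.e j) m = if m = j then 1 else 0 := by
  rw [coeff, H.horth]
  split_ifs with h
  · subst h
    exact div_self (by exact_mod_cast (H.hωpos m).ne')
  · exact zero_div _

theorem eval_e (j : ℕ) (w : ℂ) : H.eval (H.e j) w = w ^ j := by
  rw [eval, tsum_eq_single j fun m hm => by rw [H.coeff_e, if_neg hm, zero_mul],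
    H.coeff_e, if_pos rfl, one_mul]

theorem eval_one (w : ℂ) : H.eval H.one w = 1 := by
  rw [one, eval_e, pow_zero]

theorem inner_shift_pow_of_kernel {κ : H.E} {w : ℂ} (hκ : ∀ g, ⟪κ, g⟫_ℂ = H.eval g w)
    (j : ℕ) (f : H.E) : ⟪κ, (H.S ^ j) f⟫_ℂ = w ^ j * ⟪κ, f⟫_ℂ := by
  have hshift : (innerSL ℂ κ).comp H.S = w • innerSL ℂ κ := by
    refine ContinuousLinearMap.ext_on
      (Submodule.dense_iff_topologicalClosure_eq_top.mpr H.hdense) ?_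
    rintro _ ⟨m, rfl⟩
    simp [H.hshift, hκ, H.eval_e, pow_succ']
  have hS : ∀ x, ⟪κ, H.S x⟫_ℂ = w * ⟪κ, x⟫_ℂ := fun x => by
    simpa using DFunLike.congr_fun hshift x
  induction j with
  | zero => simp
  | succ j ih => rw [pow_succ', mul_apply_eq_comp, hS, ih, pow_succ', mul_assoc]

theorem polyMul_one (f : H.E) : H.polyMul 1 f = f := by
  have hsupp : (1 : Polynomial ℂ).support = {0} := Polynomial.support_monomial 0 one_ne_zero
  simp [polyMul, hsupp]

theorem mem_genSub_self (f : H.E) : f ∈ H.genSub f :=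
  Submodule.le_topologicalClosure _ (Submodule.subset_span ⟨1, H.polyMul_one f⟩)

theorem mem_genSub_inv_norm_smul (f : H.E) : f ∈ H.genSub ((‖f‖ : ℂ)⁻¹ • f) := by
  rcases eq_or_ne f 0 with rfl | hf
  · exact Submodule.zero_mem _
  · convert Submodule.smul_mem _ (‖f‖ : ℂ) (H.mem_genSub_self ((‖f‖ : ℂ)⁻¹ • f))
    rw [smul_inv_smul₀ (by exact_mod_cast norm_ne_zero_iff.mpr hf)]

theorem kernel_mem_orthogonal_genSub {κ : H.E} {w : ℂ} (hκ : ∀ g, ⟪κ, g⟫_ℂ = H.eval g w)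
    {f : H.E} (hf : ⟪κ, f⟫_ℂ = 0) : κ ∈ (H.genSub f)ᗮ := by
  rw [genSub, Submodule.orthogonal_closure, Submodule.mem_orthogonal']
  intro _ hg
  refine Submodule.span_induction ?_ (inner_zero_right _) (fun _ _ _ _ h₁ h₂ => ?_)
    (fun a _ _ h => ?_) hg
  · rintro _ ⟨p, rfl⟩
    simp only [polyMul, inner_sum, inner_smul_right, H.inner_shift_pow_of_kernel hκ, hf, mul_zero,
      Finset.sum_const_zero]
  · rw [inner_add_right, h₁, h₂, add_zero]
  · rw [inner_smul_right, h, mul_zero]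

theorem linearIndependent_of_kernel {n : ℕ} {z : Fin n → ℂ} (hinj : Function.Injective z)
    {k : Fin n → H.E} (hk : ∀ i g, ⟪k i, g⟫_ℂ = H.eval g (z i)) : LinearIndependent ℂ k := by
  rw [Fintype.linearIndependent_iff]
  intro c hc
  have hV : Matrix.vecMul (star c) (Matrix.vandermonde z) = 0 := by
    funext m
    have := congrArg (fun x => ⟪x, H.e m⟫_ℂ) hc
    simpa [sum_inner, inner_smul_left, hk, H.eval_e, Matrix.vecMul, dotProduct,
      Matrix.vandermonde_apply, mul_comm] using this
  have := Matrix.eq_zero_of_vecMul_eq_zero (Matrix.det_vandermonde_ne_zero_iff.mpr hinj) hV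
  intro i
  simpa using congrFun this i

end WeightedHardySpace

theorem dist_sq_shapiroShields_general (H : WeightedHardySpace) (n : ℕ) (z : Fin n → ℂ)
    (hinj : Function.Injective z)
    (k : Fin n → H.E) (hk : ∀ i, ∀ g : H.E, ⟪k i, g⟫_ℂ = H.eval g (z i)) :
    let K : Matrix (Fin n) (Fin n) ℂ := Matrix.of fun s t => H.eval (k s) (z t)
    let fZ : H.E := K.det • H.one -
      ∑ s : Fin n, (K.updateRow s (fun _ => (1 : ℂ))).det • k s
    let gZ : H.E := ((‖fZ‖ : ℂ))⁻¹ • fZ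
    ((Metric.infDist H.one (H.genSub gZ : Set H.E)) ^ 2 : ℂ) = ∑ i, ∑ j, K⁻¹ i j := by
  intro K fZ gZ
  set G := Matrix.gram ℂ k
  have hKG : K = Gᵀ := Matrix.ext fun s t => (hk t (k s)).symm
  have hG : IsUnit G.det := isUnit_iff_ne_zero.mpr
    (Matrix.det_gram_ne_zero_iff_linearIndependent.mpr (H.linearIndependent_of_kernel hinj hk))
  set u := ∑ s, (G⁻¹ *ᵥ 1) s • k s
  have hku : ∀ r, ⟪k r, u⟫_ℂ = 1 := Matrix.inner_sum_gram_inv_mulVec_smul hG 1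
  have hfZ : fZ = K.det • (H.one - u) := by
    simp only [fZ, u, smul_sub, Finset.smul_sum, smul_smul, hKG, Matrix.updateRow_transpose,
      Matrix.det_transpose, Matrix.det_updateCol_eq_det_mul_inv_mulVec hG]
    rfl
  have hperp : u ∈ (H.genSub gZ)ᗮ := Submodule.sum_mem _ fun s _ => Submodule.smul_mem _ _ <|
    H.kernel_mem_orthogonal_genSub (hk s) <| by
      simp only [gZ, hfZ, inner_smul_right, inner_sub_right, hk s H.one, H.eval_one,
        hku, sub_self, mul_zero]
  have hmem : H.one - u ∈ H.genSub gZ := by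
    have hdet : K.det ≠ 0 := by rw [hKG, Matrix.det_transpose]; exact hG.ne_zero
    rw [← inv_smul_smul₀ hdet (H.one - u), ← hfZ]
    exact Submodule.smul_mem _ _ (H.mem_genSub_inv_norm_smul fZ)
  rw [Submodule.infDist_eq_norm_sub hmem (by rwa [sub_sub_cancel]), sub_sub_cancel, hKG,
    ← Matrix.transpose_nonsing_inv]
  exact (Matrix.norm_sum_gram_inv_mulVec_one_smul_sq hG).trans Finset.sum_comm

/-- Theorem 3.6: `dist²(1, [g_Z]) = v K_Z⁻¹ v*` where `v = (1,…,1)`, i.e. the sum of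
all entries of the inverse Gram matrix. -/
theorem dist_sq_shapiroShields (H : WeightedHardySpace) (n : ℕ) (z : Fin n → ℂ)
    (hz : ∀ i, ‖z i‖ < 1) (hz0 : ∀ i, z i ≠ 0) (hinj : Function.Injective z)
    (k : Fin n → H.E) (hk : ∀ i, ∀ g : H.E, ⟪k i, g⟫_ℂ = H.eval g (z i)) :
    let K : Matrix (Fin n) (Fin n) ℂ := Matrix.of fun s t => H.eval (k s) (z t)
    let fZ : H.E := K.det • H.one -
      ∑ s : Fin n, (K.updateRow s (fun _ => (1 : ℂ))).det • k s
    let gZ : H.E := ((‖fZ‖ : ℂ))⁻¹ • fZ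
    ((Metric.infDist H.one (H.genSub gZ : Set H.E)) ^ 2 : ℂ) = ∑ i, ∑ j, K⁻¹ i j :=
  dist_sq_shapiroShields_general H n z hinj k hk
end
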